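/- Let p be a prime, let χ be an irreducible complex character of a finite group G, and write c(χ) = p^a·m where p does not divide m. If n is a natural number not divisible by p such that ℚ_{p^f} ⊆ ℚ_{pn}(χ), then ℚ_{p^f} ⊆ ℚ_{pm}(χ). Moreover f ≤ a, except possibly when f = 1 and a = 0. -/

import Mathlib

open scoped Classical

noncomputable section

namespace PaperHZC

/-- The `n`-th cyclotomic field `ℚ_n = ℚ(e^{2πi/n})`, as a subfield of `ℂ`. -/
def cyclo (n : ℕ) : IntermediateField ℚ ℂ :=
  IntermediateField.adjoin ℚ {Complex.exp (2 * Real.pi * Complex.I / n)}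

/-- The field of values `ℚ(χ)` of a character `χ`. -/
def charField {G : Type} (χ : G → ℂ) : IntermediateField ℚ ℂ :=
  IntermediateField.adjoin ℚ (Set.range χ)

/-- `F(χ) = ⟨F, ℚ(χ)⟩`. -/
def fieldAdjChar (F : IntermediateField ℚ ℂ) {G : Type} (χ : G → ℂ) : IntermediateField ℚ ℂ :=
  F ⊔ charField χ

/-- The conductor `c(χ)` of a character: the least `n ≥ 1` with `ℚ(χ) ⊆ ℚ_n`. -/
def conductor {G : Type} (χ : G → ℂ) : ℕ :=
  sInf {n : ℕ | 0 < n ∧ charField χ ≤ cyclo n}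

/-- The conductor of an abelian number field: the least `n ≥ 1` with `F ⊆ ℚ_n`. -/
def fieldConductor (F : IntermediateField ℚ ℂ) : ℕ :=
  sInf {n : ℕ | 0 < n ∧ F ≤ cyclo n}

/-- `n_p`, the `p`-part of a natural number `n`. -/
def pPart (p n : ℕ) : ℕ := p ^ n.factorization p

/-- `n_{p'}`, the `p'`-part of a natural number `n`. -/
def pPartCo (p n : ℕ) : ℕ := n / pPart p n

/-- `χ : G → ℂ` is an irreducible (complex) character of `G`. -/
def IsIrrChar (G : Type) [Group G] (χ : G → ℂ) : Prop :=
  ∃ V : FDRep ℂ G, CategoryTheory.Simple V ∧ χ = V.character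

/-- `χ : G → ℂ` is a (complex) character of `G` (of some nonzero representation). -/
def IsChar (G : Type) [Group G] (χ : G → ℂ) : Prop :=
  ∃ V : FDRep ℂ G, χ = V.character ∧ χ 1 ≠ 0

/-- The usual inner product of class functions on a finite group. -/
def innerProd (G : Type) [Group G] [Finite G] (α β : G → ℂ) : ℂ :=
  (Nat.card G : ℂ)⁻¹ * ∑ᶠ g : G, α g * (starRingEnd ℂ) (β g)

/-- The size of the conjugacy class of `g`. -/
def classSize {G : Type} [Group G] (g : G) : ℕ := Nat.card {h : G // IsConj g h}

/-- The value `ω_χ(g) = |cl(g)|·χ(g)/χ(1)` of the central character attached to `χ`. -/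
def centralChar {G : Type} [Group G] (χ : G → ℂ) (g : G) : ℂ :=
  (classSize g : ℂ) * χ g / χ 1

/-- The ring of algebraic integers in `ℂ`. -/
abbrev AlgInt : Subalgebra ℤ ℂ := integralClosure ℤ ℂ

/-- A complex number lies in the ideal `M` of the algebraic integers. -/
def memI (M : Ideal AlgInt) (z : ℂ) : Prop := ∃ x ∈ M, (x : ℂ) = z

/-- `M` is a maximal ideal of the algebraic integers lying over the prime `p`. -/
def IsMaximalOver (p : ℕ) (M : Ideal AlgInt) : Prop := M.IsMaximal ∧ (p : AlgInt) ∈ M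

/-- Two irreducible characters lie in the same `p`-block: their central characters are
congruent modulo a maximal ideal of the algebraic integers over `p`. -/
def InSameBlock (p : ℕ) {G : Type} [Group G] [Finite G] (χ ψ : G → ℂ) : Prop :=
  ∃ M : Ideal AlgInt, IsMaximalOver p M ∧ ∀ g : G, memI M (centralChar χ g - centralChar ψ g)

/-- The order of a Sylow `p`-subgroup of the centralizer of `g`, i.e. of a defect group of
the conjugacy class of `g`. -/
def classDefectOrder (p : ℕ) {G : Type} [Group G] (g : G) : ℕ :=
  pPart p (Nat.card (Subgroup.centralizer ({g} : Set G)))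

/-- `D` is a defect group of the `p`-block of the irreducible character `χ`: by Brauer's
characterization, `D` is a Sylow `p`-subgroup of the centralizer of an element of a defect
class (a class on which the central character of the block does not vanish modulo `M`, of
minimal defect among such classes). -/
def IsDefectGroupOfChar (p : ℕ) {G : Type} [Group G] [Finite G] (χ : G → ℂ)
    (D : Subgroup G) : Prop :=
  ∃ M : Ideal AlgInt, IsMaximalOver p M ∧
    (∃ g : G, ¬ memI M (centralChar χ g) ∧ D ≤ Subgroup.centralizer ({g} : Set G) ∧
        Nat.card D = classDefectOrder p g) ∧
    ∀ h : G, ¬ memI M (centralChar χ h) → Nat.card D ≤ classDefectOrder p h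

/-- The degree `χ(1)` of a character, as a natural number. -/
def charDegree {G : Type} [Group G] (χ : G → ℂ) : ℕ := ⌊(χ 1).re⌋₊

/-- `χ` has `p`-height zero: `χ(1)_p = |G|_p / |D|` for a defect group `D` of its block. -/
def HasPHeightZero (p : ℕ) {G : Type} [Group G] [Finite G] (χ : G → ℂ) : Prop :=
  ∃ D : Subgroup G, IsDefectGroupOfChar p χ D ∧
    pPart p (charDegree χ) * Nat.card D = pPart p (Nat.card G)

/-- The `g`-conjugate `θ^g` of a character `θ` of a (normal) subgroup `N`. -/
def conjChar {G : Type} [Group G] {N : Subgroup G} (g : G) (θ : ↥N → ℂ) : ↥N → ℂ :=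
  fun n => if h : g * (n : G) * g⁻¹ ∈ N then θ ⟨g * (n : G) * g⁻¹, h⟩ else 0

/-- Restriction of a character of `H` to a smaller subgroup `K ≤ H`. -/
def res {G : Type} [Group G] {H K : Subgroup G} (h : K ≤ H) (χ : ↥H → ℂ) : ↥K → ℂ :=
  fun x => χ ⟨(x : G), h x.2⟩

/-- Restriction of a character of `G` to a subgroup `H`. -/
def resG {G : Type} [Group G] (H : Subgroup G) (χ : G → ℂ) : ↥H → ℂ := fun x => χ (x : G)

/-- `χ ∈ Irr(G)` lies over `θ ∈ Irr(N)`: `θ` is a constituent of `χ_N`. -/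
def LiesOver {G : Type} [Group G] [Finite G] (N : Subgroup G) (χ : G → ℂ)
    (θ : ↥N → ℂ) : Prop :=
  innerProd ↥N (resG N χ) θ ≠ 0

/-- The induced character `ψ^G` of a character `ψ` of a subgroup `H ≤ G`. -/
def inducedChar {G : Type} [Group G] [Finite G] (H : Subgroup G) (ψ : ↥H → ℂ) : G → ℂ :=
  fun g => (Nat.card H : ℂ)⁻¹ *
    ∑ᶠ x : G, if h : x * g * x⁻¹ ∈ H then ψ ⟨x * g * x⁻¹, h⟩ else 0

/-- An abelian number field: a finite Galois extension of `ℚ` inside `ℂ` with abelian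
Galois group. -/
def IsAbelianNumberField (F : IntermediateField ℚ ℂ) : Prop :=
  FiniteDimensional ℚ F ∧ IsGalois ℚ F ∧ ∀ σ τ : F ≃ₐ[ℚ] F, σ * τ = τ * σ

/-
Work in `Gal(ℚ_N/ℚ) ≅ (ℤ/N)ˣ` for `N = p^b·n·m` with `b` large, where `ℚ_{p^a m} ⊇ ℚ(χ)` and all the
cyclotomic fields involved live. By the Chinese remainder theorem every `σ` fixing `ℚ_{pm}(χ)`
factors as `σ = τρ` with `τ` trivial on `ℚ_{p^b}` and `ρ` trivial on `ℚ_{nm}`. Then `τ = σρ⁻¹` is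
trivial on `ℚ_{p^a}` and on `ℚ_m`, hence on `ℚ_{p^a m} ⊇ ℚ(χ)`, so `ρ = τ⁻¹σ` fixes `ℚ(χ)`; it also
fixes `ℚ_p` and `ℚ_n`, hence `ℚ_{pn}(χ) ⊇ ℚ_{p^f}`, and therefore so does `σ`. Galois theory in
`ℚ_N` gives `ℚ_{p^f} ⊆ ℚ_{pm}(χ)`. For the bound, `ℚ_{p^f} ⊆ ℚ_{p^c m}` with `c = max a 1` gives
`ℚ_{p^f m} ⊆ ℚ_{p^c m}`, and comparing degrees `φ(p^f) ≤ φ(p^c)` forces `f ≤ c`.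
-/

open IntermediateField

def zeta (n : ℕ) : ℂ := Complex.exp (2 * Real.pi * Complex.I / n)

lemma cyclo_eq_adjoin_zeta (n : ℕ) : cyclo n = ℚ⟮zeta n⟯ := rfl

lemma isPrimitiveRoot_zeta (n : ℕ) [NeZero n] : IsPrimitiveRoot (zeta n) n :=
  Complex.isPrimitiveRoot_exp n (NeZero.ne n)

lemma zeta_mem_cyclo (n : ℕ) : zeta n ∈ cyclo n :=
  mem_adjoin_simple_self ℚ _

lemma cyclo_le_of_dvd {d N : ℕ} [NeZero N] (hd : d ∣ N) : cyclo d ≤ cyclo N := by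
  have : NeZero d := .of_pos (Nat.pos_of_dvd_of_pos hd (NeZero.pos N))
  obtain ⟨i, -, hi⟩ := (isPrimitiveRoot_zeta N).eq_pow_of_pow_eq_one
    (((isPrimitiveRoot_zeta d).pow_eq_one_iff_dvd N).2 hd)
  rw [cyclo_eq_adjoin_zeta, adjoin_simple_le_iff, ← hi]
  exact pow_mem (zeta_mem_cyclo N) i

lemma cyclo_mul_le_sup {a b : ℕ} (hab : a.Coprime b) : cyclo (a * b) ≤ cyclo a ⊔ cyclo b := by
  rcases Nat.eq_zero_or_pos a with rfl | ha
  · exact le_sup_left.trans_eq' (by rw [zero_mul])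
  rcases Nat.eq_zero_or_pos b with rfl | hb
  · exact le_sup_right.trans_eq' (by rw [mul_zero])
  have : NeZero a := ⟨ha.ne'⟩
  have : NeZero b := ⟨hb.ne'⟩
  have hprod : IsPrimitiveRoot (zeta a * zeta b) (a * b) := by
    have hoa := (isPrimitiveRoot_zeta a).eq_orderOf
    have hob := (isPrimitiveRoot_zeta b).eq_orderOf
    rw [IsPrimitiveRoot.iff_orderOf, (Commute.all _ _).orderOf_mul_eq_mul_orderOf_of_coprime
      (hoa ▸ hob ▸ hab), ← hoa, ← hob]
  obtain ⟨i, -, hi⟩ := hprod.eq_pow_of_pow_eq_one (isPrimitiveRoot_zeta (a * b)).pow_eq_one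
  rw [cyclo_eq_adjoin_zeta, adjoin_simple_le_iff, ← hi]
  exact pow_mem (mul_mem (le_sup_left (a := cyclo a) (zeta_mem_cyclo a))
    (le_sup_right (b := cyclo b) (zeta_mem_cyclo b))) i

instance (n : ℕ) [NeZero n] : IsCyclotomicExtension {n} ℚ (cyclo n) := by
  have hζ := isPrimitiveRoot_zeta n
  change IsCyclotomicExtension {n} ℚ ℚ⟮zeta n⟯.toSubalgebra
  rw [adjoin_simple_toSubalgebra_of_isAlgebraic
    (hζ.isIntegral (NeZero.pos n)).tower_top.isAlgebraic]
  exact hζ.adjoin_isCyclotomicExtension ℚ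

instance (n : ℕ) [NeZero n] : NumberField (cyclo n) :=
  IsCyclotomicExtension.numberField {n} ℚ _

instance (n : ℕ) [NeZero n] : IsGalois ℚ (cyclo n) :=
  IsCyclotomicExtension.isGalois {n} ℚ _

lemma finrank_cyclo (n : ℕ) [NeZero n] : Module.finrank ℚ (cyclo n) = n.totient :=
  IsCyclotomicExtension.Rat.finrank n _

/-- `Gal(ℚ_N / (E ∩ ℚ_N))`, as a subgroup of `Gal(ℚ_N/ℚ)`. -/
def galFixing (N : ℕ) (E : IntermediateField ℚ ℂ) : Subgroup Gal(cyclo N/ℚ) :=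
  fixingSubgroup Gal(cyclo N/ℚ) ((↑) ⁻¹' (E : Set ℂ) : Set (cyclo N))

section galFixing

variable {N : ℕ} {E F : IntermediateField ℚ ℂ} {σ : Gal(cyclo N/ℚ)}

lemma mem_galFixing : σ ∈ galFixing N E ↔ ∀ x : cyclo N, (x : ℂ) ∈ E → σ x = x :=
  mem_fixingSubgroup_iff _

lemma galFixing_antitone (h : E ≤ F) : galFixing N F ≤ galFixing N E :=
  fun _ hσ => mem_galFixing.2 fun x hx => mem_galFixing.1 hσ x (h hx)

lemma le_lift_fixedField_iff (hE : E ≤ cyclo N) {H : Subgroup Gal(cyclo N/ℚ)} :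
    E ≤ lift (fixedField H) ↔ H ≤ galFixing N E := by
  constructor
  · intro h τ hτ
    refine mem_galFixing.2 fun x hx => ?_
    exact ((mem_lift x).1 (h hx)) ⟨τ, hτ⟩
  · intro h z hz
    exact (mem_lift ⟨z, hE hz⟩).2 fun τ => mem_galFixing.1 (h τ.2) ⟨z, hE hz⟩ hz

lemma galFixing_sup (hE : E ≤ cyclo N) (hF : F ≤ cyclo N) :
    galFixing N (E ⊔ F) = galFixing N E ⊓ galFixing N F := by
  refine le_antisymm (le_inf (galFixing_antitone le_sup_left) (galFixing_antitone le_sup_right)) ?_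
  refine (le_lift_fixedField_iff (sup_le hE hF)).1 (sup_le ?_ ?_)
  · exact (le_lift_fixedField_iff hE).2 inf_le_left
  · exact (le_lift_fixedField_iff hF).2 inf_le_right

lemma le_of_galFixing_le [NeZero N] (hE : E ≤ cyclo N) (h : galFixing N F ≤ galFixing N E) :
    E ≤ F := by
  intro z hz
  -- `toRatAlgHom` puts `F'` over the same `ℚ`-algebra structure on `ℚ_N` as `Gal(ℚ_N/ℚ)`;
  -- `(cyclo N).val` would use `IntermediateField.algebra'`, equal only up to unfolding.
  let F' : IntermediateField ℚ (cyclo N) := F.comap (algebraMap (cyclo N) ℂ).toRatAlgHom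
  have hfix : (⟨z, hE hz⟩ : cyclo N) ∈ fixedField F'.fixingSubgroup := fun τ =>
    mem_galFixing.1 (h (mem_galFixing.2 fun x hx => τ.2 ⟨x, hx⟩)) _ hz
  rwa [IsGalois.fixedField_fixingSubgroup] at hfix

lemma mem_galFixing_adjoin_simple_iff {z : ℂ} (hz : z ∈ cyclo N) :
    σ ∈ galFixing N ℚ⟮z⟯ ↔ σ ⟨z, hz⟩ = ⟨z, hz⟩ := by
  refine ⟨fun h => mem_galFixing.1 h ⟨z, hz⟩ (mem_adjoin_simple_self ℚ z), fun h => ?_⟩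
  have hstab : σ ∈ MulAction.stabilizer Gal(cyclo N/ℚ) (⟨z, hz⟩ : cyclo N) := h
  rw [← Subgroup.zpowers_le, ← le_lift_fixedField_iff (adjoin_simple_le_iff.2 hz),
    adjoin_simple_le_iff, mem_lift ⟨z, hz⟩]
  exact fun τ => Subgroup.zpowers_le.2 hstab τ.2

end galFixing

lemma _root_.ZMod.exists_units_mul_eq_of_coprime {A B : ℕ} (h : A.Coprime B)
    (u : (ZMod (A * B))ˣ) :
    ∃ v w : (ZMod (A * B))ˣ, ZMod.unitsMap (Nat.dvd_mul_right A B) v = 1 ∧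
      ZMod.unitsMap (Nat.dvd_mul_left B A) w = 1 ∧ v * w = u := by
  let e : (ZMod (A * B))ˣ ≃* (ZMod A)ˣ × (ZMod B)ˣ :=
    (Units.mapEquiv (ZMod.chineseRemainder h).toMulEquiv).trans MulEquiv.prodUnits
  have he : ∀ x, e x = (ZMod.unitsMap (Nat.dvd_mul_right A B) x,
      ZMod.unitsMap (Nat.dvd_mul_left B A) x) := fun x => by
    ext
    exacts [Prod.fst_zmod_cast _, Prod.snd_zmod_cast _]
  refine ⟨e.symm (1, (e u).2), e.symm ((e u).1, 1), ?_, ?_, e.injective ?_⟩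
  · simpa only [he] using congrArg Prod.fst (e.apply_symm_apply (1, (e u).2))
  · simpa only [he] using congrArg Prod.snd (e.apply_symm_apply ((e u).1, 1))
  · rw [map_mul, e.apply_symm_apply, e.apply_symm_apply, Prod.mk_mul_mk, one_mul, mul_one]

open IsCyclotomicExtension.Rat in
lemma mem_galFixing_cyclo_iff {N d : ℕ} [NeZero N] (hd : d ∣ N) (σ : Gal(cyclo N/ℚ)) :
    σ ∈ galFixing N (cyclo d) ↔ ZMod.unitsMap hd (galEquivZMod N (cyclo N) σ) = 1 := by
  have : NeZero d := .of_pos (Nat.pos_of_dvd_of_pos hd (NeZero.pos N))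
  have hmem := cyclo_le_of_dvd hd (zeta_mem_cyclo d)
  set z : cyclo N := ⟨zeta d, hmem⟩
  have hz : IsPrimitiveRoot z d :=
    IsPrimitiveRoot.coe_submonoidClass_iff.mp (isPrimitiveRoot_zeta d)
  rw [cyclo_eq_adjoin_zeta d, mem_galFixing_adjoin_simple_iff hmem,
    galEquivZMod_apply_of_pow_eq N _ σ ((hz.pow_eq_one_iff_dvd N).2 hd),
    show (⟨zeta d, hmem⟩ : cyclo N) = z ^ 1 from (pow_one z).symm,
    (hz.isOfFinOrder (NeZero.ne d)).pow_eq_pow_iff_modEq, ← hz.eq_orderOf,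
    ← ZMod.natCast_eq_natCast_iff, Units.ext_iff, ZMod.unitsMap_val, ZMod.cast_eq_val,
    Nat.cast_one, Units.val_one]

open IsCyclotomicExtension.Rat in
lemma exists_galFixing_mul_eq {A B : ℕ} [NeZero (A * B)] (h : A.Coprime B)
    (σ : Gal(cyclo (A * B)/ℚ)) :
    ∃ τ ∈ galFixing (A * B) (cyclo A), ∃ ρ ∈ galFixing (A * B) (cyclo B), τ * ρ = σ := by
  let e := galEquivZMod (A * B) (cyclo (A * B))
  obtain ⟨v, w, hv, hw, hvw⟩ := ZMod.exists_units_mul_eq_of_coprime h (e σ)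
  refine ⟨e.symm v, ?_, e.symm w, ?_, e.injective ?_⟩
  · rwa [mem_galFixing_cyclo_iff, e.apply_symm_apply]
  · rwa [mem_galFixing_cyclo_iff, e.apply_symm_apply]
  · rwa [map_mul, e.apply_symm_apply, e.apply_symm_apply]

lemma galFixing_cyclo_antitone {N d e : ℕ} [NeZero e] (hde : d ∣ e) :
    galFixing N (cyclo e) ≤ galFixing N (cyclo d) :=
  galFixing_antitone (cyclo_le_of_dvd hde)

lemma galFixing_cyclo_inf_le {N d e : ℕ} [NeZero N] (h : d.Coprime e) (hde : d * e ∣ N) :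
    galFixing N (cyclo d) ⊓ galFixing N (cyclo e) ≤ galFixing N (cyclo (d * e)) := by
  rw [← galFixing_sup (cyclo_le_of_dvd (dvd_of_mul_right_dvd hde))
    (cyclo_le_of_dvd (dvd_of_mul_left_dvd hde))]
  exact galFixing_antitone (cyclo_mul_le_sup h)

theorem cyclo_prime_pow_le_sup_of_le_sup {p a m n f : ℕ} (hp : p.Prime) (hm : ¬ p ∣ m)
    (hn : ¬ p ∣ n) {K : IntermediateField ℚ ℂ} (hK : K ≤ cyclo (p ^ a * m))
    (h : cyclo (p ^ f) ≤ cyclo (p * n) ⊔ K) : cyclo (p ^ f) ≤ cyclo (p * m) ⊔ K := by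
  have hpm : p.Coprime m := hp.coprime_iff_not_dvd.2 hm
  have hpn : p.Coprime n := hp.coprime_iff_not_dvd.2 hn
  have : NeZero p := ⟨hp.ne_zero⟩
  have : NeZero m := ⟨fun h0 => hm (h0 ▸ dvd_zero p)⟩
  have : NeZero n := ⟨fun h0 => hn (h0 ▸ dvd_zero p)⟩
  set b := max f (max a 1)
  set N := p ^ b * (n * m)
  have hpb : p ∣ p ^ b := dvd_pow_self p (by omega)
  have hab : p ^ a ∣ p ^ b := pow_dvd_pow p (by omega)
  have hfb : p ^ f ∣ p ^ b := pow_dvd_pow p (by omega)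
  have hpmN : cyclo (p * m) ≤ cyclo N := cyclo_le_of_dvd (mul_dvd_mul hpb (dvd_mul_left m n))
  have hpnN : cyclo (p * n) ≤ cyclo N := cyclo_le_of_dvd (mul_dvd_mul hpb (dvd_mul_right n m))
  have hKN : K ≤ cyclo N := hK.trans (cyclo_le_of_dvd (mul_dvd_mul hab (dvd_mul_left m n)))
  refine le_of_galFixing_le (cyclo_le_of_dvd (dvd_mul_of_dvd_left hfb (n * m))) fun σ hσ => ?_
  obtain ⟨hσpm, hσK⟩ := (galFixing_sup hpmN hKN).le hσ
  obtain ⟨τ, hτ, ρ, hρ, rfl⟩ := exists_galFixing_mul_eq ((hpn.mul_right hpm).pow_left b) σ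
  have hτm : τ ∈ galFixing N (cyclo m) := by
    rw [← mul_inv_cancel_right τ ρ]
    exact mul_mem (galFixing_cyclo_antitone (dvd_mul_left m p) hσpm)
      (inv_mem (galFixing_cyclo_antitone (dvd_mul_left m n) hρ))
  have hτK : τ ∈ galFixing N K := galFixing_antitone hK <|
    galFixing_cyclo_inf_le (hpm.pow_left a) (mul_dvd_mul hab (dvd_mul_left m n))
      ⟨galFixing_cyclo_antitone hab hτ, hτm⟩
  have hρp : ρ ∈ galFixing N (cyclo p) := by
    rw [← inv_mul_cancel_left τ ρ]
    exact mul_mem (inv_mem (galFixing_cyclo_antitone hpb hτ))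
      (galFixing_cyclo_antitone (dvd_mul_right p m) hσpm)
  have hρK : ρ ∈ galFixing N K := by
    rw [← inv_mul_cancel_left τ ρ]
    exact mul_mem (inv_mem hτK) hσK
  have hρpn : ρ ∈ galFixing N (cyclo (p * n)) :=
    galFixing_cyclo_inf_le hpn (mul_dvd_mul hpb (dvd_mul_right n m))
      ⟨hρp, galFixing_cyclo_antitone (dvd_mul_right n m) hρ⟩
  have hρf : ρ ∈ galFixing N (cyclo (p ^ f)) :=
    galFixing_antitone h ((galFixing_sup hpnN hKN).ge ⟨hρpn, hρK⟩)
  exact mul_mem (galFixing_cyclo_antitone hfb hτ) hρf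

open Nat in
lemma le_of_cyclo_prime_pow_le {p f c m : ℕ} (hp : p.Prime) (hm : ¬ p ∣ m) (hc : c ≠ 0)
    (h : cyclo (p ^ f) ≤ cyclo (p ^ c * m)) : f ≤ c := by
  have : NeZero p := ⟨hp.ne_zero⟩
  have : NeZero m := ⟨fun h0 => hm (h0 ▸ dvd_zero p)⟩
  have hpm : p.Coprime m := hp.coprime_iff_not_dvd.2 hm
  have hle : cyclo (p ^ f * m) ≤ cyclo (p ^ c * m) :=
    (cyclo_mul_le_sup (hpm.pow_left f)).trans (sup_le h (cyclo_le_of_dvd (dvd_mul_left m _)))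
  have htot : φ (p ^ f) * φ m ≤ φ (p ^ c) * φ m := by
    rw [← Nat.totient_mul (hpm.pow_left f), ← Nat.totient_mul (hpm.pow_left c), ← finrank_cyclo,
      ← finrank_cyclo]
    exact finrank_le_of_le_right hle
  have htot' := Nat.le_of_mul_le_mul_right htot (Nat.totient_pos.2 (NeZero.pos m))
  by_contra! hcf
  have hsucc : p * φ (p ^ c) ≤ φ (p ^ f) := by
    rw [← Nat.totient_mul_of_prime_of_dvd hp (dvd_pow_self p hc), ← pow_succ']
    exact Nat.le_of_dvd (Nat.totient_pos.2 (NeZero.pos _))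
      (Nat.totient_dvd_of_dvd (pow_dvd_pow p hcf))
  have := Nat.totient_pos.2 (NeZero.pos (p ^ c))
  nlinarith [hp.two_le]

lemma charField_le_cyclo_conductor {G : Type} {χ : G → ℂ} (h : conductor χ ≠ 0) :
    charField χ ≤ cyclo (conductor χ) :=
  (Nat.sInf_mem (Nat.nonempty_of_pos_sInf (Nat.pos_of_ne_zero h))).2

theorem lemUseful_general (p : ℕ) (hp : p.Prime) {G : Type}
    (χ : G → ℂ) (a m : ℕ) (hm : ¬ p ∣ m)
    (hc : conductor χ = p ^ a * m) (n : ℕ) (hn : ¬ p ∣ n) (f : ℕ)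
    (h : cyclo (p ^ f) ≤ fieldAdjChar (cyclo (p * n)) χ) :
    cyclo (p ^ f) ≤ fieldAdjChar (cyclo (p * m)) χ ∧ ((f = 1 ∧ a = 0) ∨ f ≤ a) := by
  have : NeZero p := ⟨hp.ne_zero⟩
  have : NeZero m := ⟨fun h0 => hm (h0 ▸ dvd_zero p)⟩
  have hK : charField χ ≤ cyclo (p ^ a * m) :=
    hc ▸ charField_le_cyclo_conductor (hc ▸ NeZero.ne (p ^ a * m))
  have hmain := cyclo_prime_pow_le_sup_of_le_sup hp hm hn hK h
  refine ⟨hmain, ?_⟩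
  have hf : f ≤ max a 1 := by
    refine le_of_cyclo_prime_pow_le hp hm (by positivity) (hmain.trans (sup_le ?_ ?_))
    · exact cyclo_le_of_dvd (mul_dvd_mul (dvd_pow_self p (by positivity)) dvd_rfl)
    · exact hK.trans (cyclo_le_of_dvd (mul_dvd_mul (pow_dvd_pow p (le_max_left a 1)) dvd_rfl))
  omega

/-- Lemma 2.1: if `c(χ) = p^a·m` with `p ∤ m`, `p ∤ n` and `ℚ_{p^f} ⊆ ℚ_{pn}(χ)`, then
`ℚ_{p^f} ⊆ ℚ_{pm}(χ)`; moreover `f ≤ a` unless possibly `f = 1` and `a = 0`. -/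
theorem lemUseful (p : ℕ) (hp : p.Prime) {G : Type} [Group G] [Finite G]
    (χ : G → ℂ) (hχ : IsIrrChar G χ) (a m : ℕ) (hm : ¬ p ∣ m)
    (hc : conductor χ = p ^ a * m) (n : ℕ) (hn : ¬ p ∣ n) (f : ℕ)
    (h : cyclo (p ^ f) ≤ fieldAdjChar (cyclo (p * n)) χ) :
    cyclo (p ^ f) ≤ fieldAdjChar (cyclo (p * m)) χ ∧ ((f = 1 ∧ a = 0) ∨ f ≤ a) :=
  lemUseful_general p hp χ a m hm hc n hn f h

end PaperHZC
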